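/- Let T be a minimum twin cover of a graph G. Then |T| ≤ det(G) ≤ |T| + det(G̃). -/

import Mathlib

open SimpleGraph

/-- The generalized Mycielskian `μ_t(G)`: vertices are `some (s, i)` for levels
`0 ≤ s ≤ t` (level `0` being the original vertices) plus a root `none`. -/
def Mycielskian {V : Type*} (G : SimpleGraph V) (t : ℕ) :
    SimpleGraph (Option (Fin (t + 1) × V)) where
  Adj x y :=
    match x, y with
    | none, none => False
    | none, some (s, _) => s.val = t
    | some (s, _), none => s.val = t
    | some (s, i), some (r, j) =>
        G.Adj i j ∧ ((s.val = 0 ∧ r.val = 0) ∨ s.val + 1 = r.val ∨ r.val + 1 = s.val)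
  symm := by
    constructor
    rintro (_ | ⟨s, i⟩) (_ | ⟨r, j⟩) h
    · exact h
    · exact h
    · exact h
    · exact ⟨h.1.symm, by tauto⟩
  loopless := by
    constructor
    rintro (_ | ⟨s, i⟩) h
    · exact h
    · exact G.loopless.irrefl i h.1

/-- `S` is a determining set for `G`: the only automorphism fixing `S` pointwise
is the identity. -/
def IsDetermining {V : Type*} (G : SimpleGraph V) (S : Set V) : Prop :=
  ∀ φ : G ≃g G, (∀ v ∈ S, φ v = v) → ∀ v, φ v = v

/-- The determining number of `G`. -/
noncomputable def detNum {V : Type*} (G : SimpleGraph V) : ℕ :=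
  sInf {n | ∃ S : Finset V, S.card = n ∧ IsDetermining G ↑S}

/-- A coloring is distinguishing if no nontrivial automorphism preserves all
color classes. -/
def IsDistinguishing {V : Type*} (G : SimpleGraph V) {C : Type*} (c : V → C) : Prop :=
  ∀ φ : G ≃g G, (∀ v, c (φ v) = c v) → ∀ v, φ v = v

/-- The distinguishing number of `G`. -/
noncomputable def distNum {V : Type*} (G : SimpleGraph V) : ℕ :=
  sInf {d | ∃ c : V → Fin d, IsDistinguishing G c}

/-- The cost of 2-distinguishing: the minimum size of a color class over all
2-distinguishing colorings. -/
noncomputable def cost2 {V : Type*} (G : SimpleGraph V) [Fintype V] : ℕ :=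
  sInf {n | ∃ c : V → Bool, IsDistinguishing G c ∧
    n = (Finset.univ.filter fun v => c v = true).card}

/-- The twin equivalence relation: equal open neighborhoods. -/
def twinSetoid {V : Type*} (G : SimpleGraph V) : Setoid V where
  r x y := G.neighborSet x = G.neighborSet y
  iseqv := ⟨fun _ => rfl, Eq.symm, Eq.trans⟩

/-- The twin quotient graph `G̃`. -/
def twinQuotient {V : Type*} (G : SimpleGraph V) :
    SimpleGraph (Quotient (twinSetoid G)) where
  Adj a b := ∃ p q : V, Quotient.mk (twinSetoid G) p = a ∧
    Quotient.mk (twinSetoid G) q = b ∧ G.Adj p q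
  symm := by constructor; rintro a b ⟨p, q, hp, hq, h⟩; exact ⟨q, p, hq, hp, h.symm⟩
  loopless := by
    constructor
    rintro a ⟨p, q, rfl, hq, h⟩
    have htw : G.neighborSet q = G.neighborSet p := Quotient.exact hq
    have hmem : q ∈ G.neighborSet p := h
    rw [← htw] at hmem
    exact G.loopless.irrefl q hmem

/-- A twin cover: contains at least one of every pair of distinct twins. -/
def IsTwinCover {V : Type*} (G : SimpleGraph V) (T : Set V) : Prop :=
  ∀ x y : V, x ≠ y → G.neighborSet x = G.neighborSet y → x ∈ T ∨ y ∈ T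

/-- A minimum twin cover. -/
def IsMinTwinCover {V : Type*} (G : SimpleGraph V) (T : Set V) : Prop :=
  IsTwinCover G T ∧ ∀ T' : Set V, IsTwinCover G T' → T.ncard ≤ T'.ncard

/-- Attach `ℓ` pendant vertices to the vertex `w` of `G`. -/
def attachPendants {V : Type*} (G : SimpleGraph V) (w : V) (ℓ : ℕ) :
    SimpleGraph (V ⊕ Fin ℓ) where
  Adj x y :=
    match x, y with
    | Sum.inl a, Sum.inl b => G.Adj a b
    | Sum.inl a, Sum.inr _ => a = w
    | Sum.inr _, Sum.inl b => b = w
    | Sum.inr _, Sum.inr _ => False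
  symm := by constructor; rintro (a | a) (b | b) h <;> simp_all <;> exact h.symm
  loopless := by constructor; rintro (a | a) h <;> simp_all

/-! Swapping two twins is an automorphism, so a determining set must meet every pair of twins,
i.e. it is a twin cover; minimality of `T` gives `|T| ≤ det(G)`. Conversely, an automorphism
fixing a twin cover `T` and a representative of each class of a determining set of `G̃` induces
an automorphism of `G̃` fixing that set, hence maps every vertex to a twin of itself; a vertex
moved to a distinct twin would put one of the two in `T`, where it is fixed. -/

namespace SimpleGraph

variable {V W : Type*} {G : SimpleGraph V} {G' : SimpleGraph W}

theorem adj_iff_of_neighborSet_eq {x y z : V} (h : G.neighborSet x = G.neighborSet y) :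
    G.Adj x z ↔ G.Adj y z :=
  Set.ext_iff.mp h z

theorem twinQuotient_adj_mk {x y : V} :
    (twinQuotient G).Adj (Quotient.mk (twinSetoid G) x) (Quotient.mk (twinSetoid G) y) ↔
      G.Adj x y := by
  refine ⟨?_, fun h => ⟨x, y, rfl, rfl, h⟩⟩
  rintro ⟨p, q, hp, hq, hpq⟩
  have hxq : G.Adj x q := (adj_iff_of_neighborSet_eq (Quotient.exact hp)).mp hpq
  exact ((adj_iff_of_neighborSet_eq (Quotient.exact hq)).mp hxq.symm).symm

theorem Iso.neighborSet_apply_eq_iff (φ : G ≃g G') {x y : V} :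
    G'.neighborSet (φ x) = G'.neighborSet (φ y) ↔ G.neighborSet x = G.neighborSet y := by
  rw [← φ.image_neighborSet, ← φ.image_neighborSet, Set.image_eq_image φ.injective]

def Iso.twinQuotient (φ : G ≃g G') : twinQuotient G ≃g twinQuotient G' where
  toEquiv := Quotient.congr φ.toEquiv fun _ _ => φ.neighborSet_apply_eq_iff.symm
  map_rel_iff' := by
    rintro ⟨x⟩ ⟨y⟩
    exact twinQuotient_adj_mk.trans (φ.map_adj_iff.trans twinQuotient_adj_mk.symm)

@[simp]
theorem Iso.twinQuotient_mk (φ : G ≃g G') (x : V) :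
    φ.twinQuotient (Quotient.mk (twinSetoid G) x) = Quotient.mk (twinSetoid G') (φ x) :=
  rfl

def twinSwap [DecidableEq V] {x y : V} (h : G.neighborSet x = G.neighborSet y) : G ≃g G where
  toEquiv := Equiv.swap x y
  map_rel_iff' := by
    intro a b
    have hz (z : V) : G.Adj x z ↔ G.Adj y z := adj_iff_of_neighborSet_eq h
    simp only [Equiv.swap_apply_def]
    split_ifs <;> subst_vars <;> grind [G.adj_comm, G.loopless.irrefl]

theorem twinSwap_apply_left [DecidableEq V] {x y : V} (h : G.neighborSet x = G.neighborSet y) :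
    twinSwap h x = y :=
  Equiv.swap_apply_left x y

theorem twinSwap_apply_of_ne_of_ne [DecidableEq V] {x y z : V}
    (h : G.neighborSet x = G.neighborSet y) (hx : z ≠ x) (hy : z ≠ y) : twinSwap h z = z :=
  Equiv.swap_apply_of_ne_of_ne hx hy

theorem IsDetermining.isTwinCover {S : Set V} (hS : IsDetermining G S) : IsTwinCover G S := by
  classical
  intro x y hne h
  by_contra! hxy
  have hfix := hS (twinSwap h) fun v hv =>
    twinSwap_apply_of_ne_of_ne h (ne_of_mem_of_not_mem hv hxy.1) (ne_of_mem_of_not_mem hv hxy.2)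
  exact hne ((twinSwap_apply_left h).symm.trans (hfix x)).symm

theorem IsTwinCover.isDetermining_union_image_out {T : Set V} (hT : IsTwinCover G T)
    {S : Set (Quotient (twinSetoid G))} (hS : IsDetermining (twinQuotient G) S) :
    IsDetermining G (T ∪ Quotient.out '' S) := by
  intro φ hfix v
  have hfixS : ∀ c ∈ S, φ.twinQuotient c = c := by
    intro c hc
    rw [← c.out_eq, Iso.twinQuotient_mk, hfix _ (Or.inr ⟨c, hc, rfl⟩)]
  have htwin : G.neighborSet (φ v) = G.neighborSet v :=
    Quotient.exact (hS φ.twinQuotient hfixS (Quotient.mk _ v))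
  by_contra hv
  rcases hT _ _ hv htwin with hφv | hv'
  · exact hv (φ.injective (hfix _ (Or.inl hφv)))
  · exact hv (hfix _ (Or.inl hv'))

theorem detNum_le_ncard {S : Set V} (hfin : S.Finite) (hS : IsDetermining G S) :
    detNum G ≤ S.ncard :=
  Nat.sInf_le ⟨hfin.toFinset, (Set.ncard_eq_toFinset_card S hfin).symm, by simpa using hS⟩

theorem exists_isDetermining_card_eq_detNum [Finite V] :
    ∃ S : Finset V, S.card = detNum G ∧ IsDetermining G S :=
  Nat.sInf_mem (s := {n | ∃ S : Finset V, S.card = n ∧ IsDetermining G ↑S})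
    ⟨_, Set.finite_univ.toFinset, rfl, fun _ h v => h v (by simp)⟩

end SimpleGraph

/-- `|T| ≤ det(G) ≤ |T| + det(G̃)` for a minimum twin cover `T`. -/
theorem det_twin_cover_bounds {V : Type*} [Fintype V] (G : SimpleGraph V)
    (T : Set V) (hT : IsMinTwinCover G T) :
    T.ncard ≤ detNum G ∧ detNum G ≤ T.ncard + detNum (twinQuotient G) := by
  constructor
  · obtain ⟨S, hcard, hS⟩ := exists_isDetermining_card_eq_detNum (G := G)
    rw [← hcard, ← Set.ncard_coe_finset]
    exact hT.2 S hS.isTwinCover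
  · obtain ⟨S, hcard, hS⟩ := exists_isDetermining_card_eq_detNum (G := twinQuotient G)
    let R : Set V := Quotient.out '' (S : Set (Quotient (twinSetoid G)))
    calc detNum G ≤ (T ∪ R).ncard :=
          detNum_le_ncard (Set.toFinite _) (hT.1.isDetermining_union_image_out hS)
      _ ≤ T.ncard + R.ncard := Set.ncard_union_le T R
      _ ≤ T.ncard + S.card := by grw [Set.ncard_image_le (Set.toFinite _), Set.ncard_coe_finset]
      _ = T.ncard + detNum (twinQuotient G) := by rw [hcard]
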